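/- For n ≥ 2, let P_n denote the simplex Q_n(1/n) (spanned by 0 and partial sums of n unit vectors with pairwise inner products -1/n). Let S be the n-dimensional simplex in ℝ^{n+1} with vertices 0 and the rows of √((n+1)/n) times the matrix whose k-th row (k = 1,…,n) has entries (n+1-k)/(n+1) in positions 1,…,k and -k/(n+1) in positions k+1,…,n+1. Then S is congruent to P_n. -/

import Mathlib

/-!
The vertices of `P` are the partial sums `v₀ + ⋯ + vᵢ` of the rows `vₖ` of `v`, and those of `S`
are the partial sums of `dₖ = √((n+1)/n) (eₖ - 𝟙/(n+1))`. Both families have the Gram matrix of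
`Qₙ(1/n)` (`1` on the diagonal, `-1/n` off it), which is nonsingular, so the `vₖ` form a basis of
`ℝⁿ` and `vₖ ↦ dₖ` extends to a linear isometry. It maps vertices to vertices, hence `P` onto `S`.
-/

open Finset RealInnerProductSpace

theorem exists_linearIsometry_apply_eq_of_inner_eq {ι E E' : Type*}
    [NormedAddCommGroup E] [InnerProductSpace ℝ E] [NormedAddCommGroup E'] [InnerProductSpace ℝ E']
    (v : Module.Basis ι ℝ E) (d : ι → E') (h : ∀ i j, ⟪v i, v j⟫ = ⟪d i, d j⟫) :
    ∃ F : E →ₗᵢ[ℝ] E', ∀ i, F (v i) = d i := by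
  set f := v.constr ℝ d
  have hf : ∀ i, f (v i) = d i := v.constr_basis ℝ d
  have hinner : (innerₗ E').compl₁₂ f f = innerₗ E :=
    LinearMap.ext_basis v v fun i j => by simp [hf, h]
  exact ⟨f.isometryOfInner fun x y => LinearMap.congr_fun₂ hinner x y, hf⟩

theorem linearIndependent_of_inner_eq_ite {ι E : Type*} [Fintype ι] [DecidableEq ι]
    [NormedAddCommGroup E] [InnerProductSpace ℝ E] {v : ι → E} {w : ℝ}
    (h : ∀ i j, ⟪v i, v j⟫ = if i = j then 1 else -w) (hw : w ≠ -1)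
    (hw' : 1 - (Fintype.card ι - 1) * w ≠ 0) : LinearIndependent ℝ v := by
  rw [Fintype.linearIndependent_iff]
  intro g hg j
  have hrow : ∀ j, (1 + w) * g j - w * ∑ i, g i = 0 := by
    intro j
    have hite : ∀ i, g i * (if i = j then 1 else -w) =
        (if i = j then (1 + w) * g i else 0) - w * g i := by
      intro i; split_ifs <;> ring
    have := congrArg (fun x => ⟪x, v j⟫) hg
    simpa [sum_inner, real_inner_smul_left, h, hite, sum_sub_distrib, mul_sum] using this
  have hsum : ∑ i, g i = 0 := by
    have := Finset.sum_eq_zero (s := univ) fun j _ => hrow j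
    rw [sum_sub_distrib, ← mul_sum, Finset.sum_const, card_univ, nsmul_eq_mul] at this
    refine (mul_eq_zero.mp ?_).resolve_left hw'
    linear_combination this
  have := hrow j
  rw [hsum, mul_zero, sub_zero] at this
  exact (mul_eq_zero.mp this).resolve_left (by contrapose! hw; linarith)

theorem inner_toLp_ite_eq_ite {ι : Type*} [Fintype ι] [DecidableEq ι] {a b w : ℝ}
    (hdiag : (a - b) ^ 2 = 1 + w) (hoff : 2 * b * (a - b) + Fintype.card ι * b ^ 2 = -w)
    (x y : ι) :
    ⟪(WithLp.toLp 2 fun j => if x = j then a else b : EuclideanSpace ℝ ι),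
      WithLp.toLp 2 fun j => if y = j then a else b⟫ = if x = y then 1 else -w := by
  have hcoord : ∀ z j : ι, (if z = j then a else b) = b + if z = j then a - b else 0 := by
    intro z j; split_ifs <;> ring
  simp only [EuclideanSpace.inner_eq_star_dotProduct, dotProduct, hcoord, Pi.star_apply,
    star_trivial, mul_add, add_mul, ite_mul, zero_mul, mul_ite, mul_zero, sum_add_distrib,
    Finset.sum_const, card_univ, nsmul_eq_mul, sum_ite_eq, mem_univ, if_true]
  by_cases hxy : x = y
  · simp only [hxy, if_true]; linear_combination hoff + hdiag
  · simp only [hxy, Ne.symm hxy, if_false]; linear_combination hoff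

theorem inner_toLp_ite_eq_ite_of_sqrt {ι : Type*} [Fintype ι] [DecidableEq ι] {a b w : ℝ}
    (hι : Fintype.card ι ≠ 0) (hw : -1 ≤ w) (hw' : w * (Fintype.card ι - 1) ≤ 1)
    (hb : b = (√(1 - w * (Fintype.card ι - 1)) - √(1 + w)) / Fintype.card ι)
    (ha : a = b + √(1 + w)) (x y : ι) :
    ⟪(WithLp.toLp 2 fun j => if x = j then a else b : EuclideanSpace ℝ ι),
      WithLp.toLp 2 fun j => if y = j then a else b⟫ = if x = y then 1 else -w := by
  have hq := Real.sq_sqrt (sub_nonneg.mpr hw')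
  have hc := Real.sq_sqrt (neg_le_iff_add_nonneg'.mp hw)
  refine inner_toLp_ite_eq_ite (by rw [ha]; linear_combination hc) ?_ x y
  rw [ha, hb]
  field_simp
  linear_combination (Fintype.card ι : ℝ) * (hq - hc)

theorem Fin.sum_Iic_ite_eq {N : ℕ} (i j : Fin N) (a b : ℝ) :
    ∑ k ∈ Iic i, (if k = j then a else b) = if j ≤ i then a + i * b else (i + 1) * b := by
  have hcoord : ∀ k, (if k = j then a else b) = b + if k = j then a - b else 0 := by
    intro k; split_ifs <;> ring
  simp only [hcoord, sum_add_distrib, Finset.sum_const, Fin.card_Iic, nsmul_eq_mul, sum_ite_eq',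
    mem_Iic]
  split_ifs <;> push_cast <;> ring

/-- The vector `√((n+1)/n) (eₖ - 𝟙/(n+1))` of `ℝⁿ⁺¹`. -/
noncomputable def scaledCenteredSingle (n : ℕ) (k : Fin n) : EuclideanSpace ℝ (Fin (n + 1)) :=
  WithLp.toLp 2 fun j =>
    if k.castSucc = j then √((n + 1) / n) * (n / (n + 1)) else √((n + 1) / n) * (-1 / (n + 1))

theorem inner_scaledCenteredSingle {n : ℕ} (hn : n ≠ 0) (k l : Fin n) :
    ⟪scaledCenteredSingle n k, scaledCenteredSingle n l⟫ = if k = l then 1 else -(1 / (n : ℝ)) := by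
  set κ := √(((n : ℝ) + 1) / n)
  have hκ : κ ^ 2 * n = n + 1 := by rw [Real.sq_sqrt (by positivity)]; field_simp
  have hgap : κ * (n / (n + 1)) - κ * (-1 / (n + 1)) = κ := by field_simp; ring
  have hdiag : (κ * (n / (n + 1)) - κ * (-1 / (n + 1))) ^ 2 = 1 + 1 / n := by
    rw [hgap]; field_simp; linear_combination hκ
  have hoff : 2 * (κ * (-1 / (n + 1))) * (κ * (n / (n + 1)) - κ * (-1 / (n + 1))) +
      Fintype.card (Fin (n + 1)) * (κ * (-1 / (n + 1))) ^ 2 = -(1 / n) := by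
    rw [hgap, Fintype.card_fin]; push_cast; field_simp; linear_combination -hκ
  simpa only [scaledCenteredSingle, Fin.castSucc_inj] using
    inner_toLp_ite_eq_ite hdiag hoff k.castSucc l.castSucc

theorem sum_Iic_scaledCenteredSingle_apply (n : ℕ) (i : Fin n) (j : Fin (n + 1)) :
    (∑ k ∈ Iic i, scaledCenteredSingle n k) j = √((n + 1) / n) *
      (if (j : ℕ) ≤ (i : ℕ) then ((n : ℝ) - (i : ℕ)) / ((n : ℝ) + 1)
        else -(((i : ℕ) : ℝ) + 1) / ((n : ℝ) + 1)) := by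
  simp only [scaledCenteredSingle, WithLp.ofLp_sum, Finset.sum_apply, ← Fin.sum_Iic_castSucc
    (fun j' => if j' = j then √((n + 1) / n) * (n / (n + 1)) else √((n + 1) / n) * (-1 / (n + 1))),
    Fin.sum_Iic_ite_eq, Fin.le_def, Fin.val_castSucc]
  split_ifs <;> field_simp; ring

theorem An_coset_simplex_congruent_to_Pn
    (n : ℕ) (hn : 2 ≤ n)
    -- the standard realization of P_n = Q_n(1/n) in ℝⁿ
    (w b a : ℝ) (hw : w = 1 / (n : ℝ))
    (hb : b = (Real.sqrt (1 - w * ((n : ℝ) - 1)) - Real.sqrt (1 + w)) / n)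
    (ha : a = b + Real.sqrt (1 + w))
    (v : Fin n → Fin n → ℝ)
    (hv : ∀ i j, v i j = if i = j then a else b)
    (P : Set (EuclideanSpace ℝ (Fin n)))
    (hP : P = convexHull ℝ (insert (0 : EuclideanSpace ℝ (Fin n))
      (Set.range (fun i : Fin n =>
        (WithLp.toLp 2 (fun j => ∑ k ∈ Finset.Iic i, v k j) : EuclideanSpace ℝ (Fin n))))))
    -- the simplex S ⊂ ℝ^{n+1} spanned by 0 and the scaled coset representatives of Aₙ in Aₙ*
    (s : Fin n → EuclideanSpace ℝ (Fin (n + 1)))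
    (hs : ∀ (k : Fin n) (j : Fin (n + 1)),
      s k j = Real.sqrt (((n : ℝ) + 1) / n) *
        (if (j : ℕ) ≤ (k : ℕ) then ((n : ℝ) - (k : ℕ)) / ((n : ℝ) + 1)
         else -(((k : ℕ) : ℝ) + 1) / ((n : ℝ) + 1)))
    (S : Set (EuclideanSpace ℝ (Fin (n + 1))))
    (hS : S = convexHull ℝ (insert (0 : EuclideanSpace ℝ (Fin (n + 1))) (Set.range s))) :
    ∃ f : EuclideanSpace ℝ (Fin n) → EuclideanSpace ℝ (Fin (n + 1)),
      Isometry f ∧ f '' P = S := by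
  have hn0 : n ≠ 0 := by omega
  have hw0 : 0 < w := hw ▸ by positivity
  let V : Fin n → EuclideanSpace ℝ (Fin n) := fun k => WithLp.toLp 2 (v k)
  have hV : ∀ k l, ⟪V k, V l⟫ = if k = l then 1 else -w := by
    simp only [V, show v = fun k j => if k = j then a else b from funext₂ hv]
    refine inner_toLp_ite_eq_ite_of_sqrt (by simpa) (by linarith) ?_ (by simpa) ha
    rw [Fintype.card_fin, hw]; field_simp; linarith
  have hVind : LinearIndependent ℝ V := linearIndependent_of_inner_eq_ite hV (by linarith)
    (by rw [Fintype.card_fin, hw]; field_simp; ring_nf; positivity)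
  obtain ⟨F, hF⟩ := exists_linearIsometry_apply_eq_of_inner_eq
    (basisOfLinearIndependentOfCardEqFinrank' V hVind (by simp)) (scaledCenteredSingle n)
    (by simp [hV, inner_scaledCenteredSingle hn0, hw])
  have hvert : ∀ i, F (WithLp.toLp 2 fun j => ∑ k ∈ Iic i, v k j) = s i := by
    intro i
    ext j
    simp only [coe_basisOfLinearIndependentOfCardEqFinrank', V] at hF
    rw [← Finset.sum_fn, WithLp.toLp_sum, map_sum]
    simp only [hF, hs, sum_Iic_scaledCenteredSingle_apply]
  refine ⟨F, F.isometry, ?_⟩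
  rw [hP, hS, ← F.coe_toLinearMap, LinearMap.image_convexHull, Set.image_insert_eq, map_zero,
    ← Set.range_comp]
  simp_rw [Function.comp_def, F.coe_toLinearMap, hvert]
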